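/- For a nonzero positive semidefinite real symmetric m×m matrix Ω, one has trace(Ω)² / trace(Ω²) ≥ trace(Ω²)² / trace(Ω⁴). -/

import Mathlib

/-!
Writing `pₖ = ∑ λᵢᵏ` for the eigenvalues `λᵢ ≥ 0` of `Ω`, Cauchy–Schwarz gives `p₂² ≤ p₁ p₃` and
`p₃² ≤ p₂ p₄`, hence `p₂⁴ ≤ p₁² p₃² ≤ p₁² p₂ p₄`, i.e. `p₂³ ≤ p₁² p₄`, which is the claim after
cross-multiplying.
-/

open Matrix Finset

theorem Matrix.IsHermitian.trace_pow_eq_sum_eigenvalues_pow {n 𝕜 : Type*} [Fintype n]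
    [DecidableEq n] [RCLike 𝕜] {A : Matrix n n 𝕜} (hA : A.IsHermitian) (k : ℕ) :
    (A ^ k).trace = ∑ i, (hA.eigenvalues i : 𝕜) ^ k := by
  conv_lhs => rw [hA.spectral_theorem, ← map_pow, Unitary.conjStarAlgAut_apply, trace_mul_cycle,
    Unitary.coe_star_mul_self, one_mul, diagonal_pow, trace_diagonal]
  simp

section PowerSums

variable {ι R : Type*} [Field R] [LinearOrder R] [IsStrictOrderedRing R] (s : Finset ι)
  {x : ι → R}

theorem Finset.sum_sq_cube_le_sq_sum_mul_sum_pow_four (hx : ∀ i ∈ s, 0 ≤ x i) :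
    (∑ i ∈ s, x i ^ 2) ^ 3 ≤ (∑ i ∈ s, x i) ^ 2 * ∑ i ∈ s, x i ^ 4 := by
  set p₂ := ∑ i ∈ s, x i ^ 2
  have h₂₁₃ : p₂ ^ 2 ≤ (∑ i ∈ s, x i) * ∑ i ∈ s, x i ^ 3 :=
    sum_sq_le_sum_mul_sum_of_sq_le_mul s hx (fun i hi ↦ pow_nonneg (hx i hi) 3)
      (fun i _ ↦ le_of_eq (by ring))
  have h₃₂₄ : (∑ i ∈ s, x i ^ 3) ^ 2 ≤ p₂ * ∑ i ∈ s, x i ^ 4 :=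
    sum_sq_le_sum_mul_sum_of_sq_le_mul s (fun i _ ↦ sq_nonneg (x i))
      (fun i _ ↦ by positivity) (fun i _ ↦ le_of_eq (by ring))
  rcases (sum_nonneg fun i _ ↦ sq_nonneg (x i) : 0 ≤ p₂).eq_or_lt with hp₂ | hp₂
  · rw [show p₂ = 0 from hp₂.symm, zero_pow three_ne_zero]
    exact mul_nonneg (sq_nonneg _) (sum_nonneg fun i _ ↦ by positivity)
  refine le_of_mul_le_mul_left ?_ hp₂
  calc p₂ * p₂ ^ 3 = (p₂ ^ 2) ^ 2 := by ring
    _ ≤ ((∑ i ∈ s, x i) * ∑ i ∈ s, x i ^ 3) ^ 2 := by gcongr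
    _ = (∑ i ∈ s, x i) ^ 2 * (∑ i ∈ s, x i ^ 3) ^ 2 := by ring
    _ ≤ (∑ i ∈ s, x i) ^ 2 * (p₂ * ∑ i ∈ s, x i ^ 4) := by gcongr
    _ = p₂ * ((∑ i ∈ s, x i) ^ 2 * ∑ i ∈ s, x i ^ 4) := by ring

end PowerSums

-- The degenerate cases `b = 0`, `d = 0` hold because `x / 0 = 0`.
theorem sq_div_le_sq_div_of_pow_three_le_sq_mul {R : Type*} [Field R] [LinearOrder R]
    [IsStrictOrderedRing R] {a b d : R} (hb : 0 ≤ b) (hd : 0 ≤ d) (h : b ^ 3 ≤ a ^ 2 * d) :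
    b ^ 2 / d ≤ a ^ 2 / b := by
  rcases hb.eq_or_lt with rfl | hb
  · simp
  rcases hd.eq_or_lt with rfl | hd
  · simp only [div_zero]
    positivity
  rw [div_le_div_iff₀ hd hb]
  linarith [pow_succ b 2]

theorem stmt_6_general {m : ℕ} (Ω : Matrix (Fin m) (Fin m) ℝ) (hΩ : Ω.PosSemidef) :
    ((Ω ^ 2).trace) ^ 2 / (Ω ^ 4).trace ≤ (Ω.trace) ^ 2 / (Ω ^ 2).trace := by
  have htrace (k : ℕ) : (Ω ^ k).trace = ∑ i, hΩ.1.eigenvalues i ^ k := by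
    simpa using hΩ.1.trace_pow_eq_sum_eigenvalues_pow k
  have hnonneg (i : Fin m) (_ : i ∈ univ) : 0 ≤ hΩ.1.eigenvalues i := hΩ.eigenvalues_nonneg i
  have htrace_one : Ω.trace = ∑ i, hΩ.1.eigenvalues i := by simpa using htrace 1
  rw [htrace_one, htrace 2, htrace 4]
  exact sq_div_le_sq_div_of_pow_three_le_sq_mul (sum_nonneg fun i _ ↦ by positivity)
    (sum_nonneg fun i _ ↦ by positivity) (sum_sq_cube_le_sq_sum_mul_sum_pow_four univ hnonneg)

/-- For a nonzero positive semidefinite real symmetric `m × m` matrix `Ω`,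
`trace(Ω)² / trace(Ω²) ≥ trace(Ω²)² / trace(Ω⁴)`. -/
theorem stmt_6 {m : ℕ} (Ω : Matrix (Fin m) (Fin m) ℝ) (hΩ : Ω.PosSemidef) (hne : Ω ≠ 0) :
    ((Ω ^ 2).trace) ^ 2 / (Ω ^ 4).trace ≤ (Ω.trace) ^ 2 / (Ω ^ 2).trace :=
  stmt_6_general Ω hΩ
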